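/- Let C be a normal closed cone with nonempty interior in a real Banach space. Let f : int C → int C be type K order-preserving and homogeneous, and let g(x) := f(x)/‖f(x)‖ for x ∈ int C. If f has an eigenvector in int C and for some x ∈ int C the orbit {g^k(x) : k ∈ ℕ} has compact closure, then g^k(x) converges to an eigenvector of f in int C. -/

import Mathlib

open Filter Topology Set

/-!
Since `F := f / μ` fixes `u` and is order-preserving and homogeneous, every iterate `F^k x` stays
in an order interval `[a u, b u]`. Normality bounds these iterates, so compactness of the
normalised orbit makes the orbit itself relatively compact, and its set `L` of cluster points is
a nonempty compact `F`-invariant subset of `int C`.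

On `L` the upper semicontinuous function `w ↦ m(F w / w)` increases along orbits, so it is
constant, say `ℓ`, along the orbit of a maximiser `z`. The defects `F^(j+1) z - ℓ F^j z` lie on the
boundary of `C` and, `F` being of type K, each dominates a positive multiple of the previous one.
A supporting functional `φ` at the `n`-th defect thus kills all earlier ones, so
`φ (F^n z) = ℓ^n φ z`; as `φ` is bounded above and below on `[a u, b u]`, this forces `ℓ = 1`.
The orbit of `z` is then increasing, and by normality it converges to a fixed point `v ∈ L`.
Finally, the intervals `[(1 - t) v, (1 + t) v]` are `F`-invariant, so once some `F^k x` comes close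
to `v` the whole tail of the orbit stays close: `F^k x → v`, and `v / ‖v‖` is the eigenvector.
-/

theorem Convex.add_mem_of_forall_smul_mem {X : Type*} [AddCommGroup X] [Module ℝ X] {C : Set X}
    (hC : Convex ℝ C) (hcone : ∀ x ∈ C, ∀ t : ℝ, 0 ≤ t → t • x ∈ C) {a b : X} (ha : a ∈ C)
    (hb : b ∈ C) : a + b ∈ C := by
  have := hcone _ (hC ha hb (by norm_num : (0 : ℝ) ≤ 1 / 2) (by norm_num : (0 : ℝ) ≤ 1 / 2)
    (by norm_num)) 2 (by norm_num)
  rwa [smul_add, smul_smul, smul_smul, show (2 : ℝ) * (1 / 2) = 1 by norm_num, one_smul,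
    one_smul] at this

def IsPosHomogeneousOn {X : Type*} [AddCommGroup X] [Module ℝ X] (F : X → X) (s : Set X) :
    Prop :=
  ∀ z ∈ s, ∀ t : ℝ, 0 < t → F (t • z) = t • F z

theorem IsPosHomogeneousOn.const_smul {X : Type*} [AddCommGroup X] [Module ℝ X] {F : X → X}
    {s : Set X} (hF : IsPosHomogeneousOn F s) (c : ℝ) : IsPosHomogeneousOn (fun z => c • F z) s :=
  fun z hz t ht => by simp only [hF z hz t ht, smul_comm c t]

theorem tendsto_of_mapClusterPt_of_dist_le {α : Type*} [PseudoMetricSpace α] {z : ℕ → α} {v : α}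
    (hv : MapClusterPt v atTop z) {M r : ℝ} (hr : 0 < r)
    (h : ∀ i k, i ≤ k → dist (z i) v < r → dist (z k) v ≤ M * dist (z i) v) :
    Tendsto z atTop (𝓝 v) := by
  rw [Metric.tendsto_atTop]
  intro ε hε
  have hd : Tendsto (fun w => dist w v) (𝓝 v) (𝓝 0) := by
    simpa using (tendsto_id (x := 𝓝 v)).dist (tendsto_const_nhds (x := v))
  have hnear : ∀ᶠ w in 𝓝 v, dist w v < r ∧ M * dist w v < ε :=
    (hd.eventually (gt_mem_nhds hr)).and ((hd.const_mul M).eventually (gt_mem_nhds (by simpa)))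
  obtain ⟨i, hi⟩ := (hv.frequently hnear).exists
  exact ⟨i, fun k hk => (h i k hk hi.1).trans_lt hi.2⟩

theorem IsCompact.isCompact_setOf_mapClusterPt {α : Type*} [TopologicalSpace α] {u : ℕ → α}
    (h : IsCompact (closure (range u))) : IsCompact {p | MapClusterPt p atTop u} :=
  h.of_isClosed_subset isClosed_setOfPred_clusterPt fun _ hp =>
    isClosed_closure.mem_of_mapClusterPt hp (.of_forall fun k => subset_closure (mem_range_self k))

theorem IsCompact.nonempty_setOf_mapClusterPt {α : Type*} [TopologicalSpace α] {u : ℕ → α}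
    (h : IsCompact (closure (range u))) : {p | MapClusterPt p atTop u}.Nonempty := by
  obtain ⟨p, -, hp⟩ := h.exists_mapClusterPt (f := atTop) (u := u)
    (tendsto_principal.mpr (.of_forall fun k => subset_closure (mem_range_self k)))
  exact ⟨p, hp⟩

theorem mapsTo_setOf_mapClusterPt_iterate {α : Type*} [TopologicalSpace α] {F : α → α} {y : α}
    (hF : ∀ p, MapClusterPt p atTop (fun k => F^[k] y) → ContinuousAt F p) :
    MapsTo F {p | MapClusterPt p atTop fun k => F^[k] y}
      {p | MapClusterPt p atTop fun k => F^[k] y} := fun p hp => by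
  have hshift : (F ∘ fun k => F^[k] y) = (fun k => F^[k] y) ∘ (· + 1) :=
    funext fun k => (Function.iterate_succ_apply' F k y).symm
  exact (hshift ▸ hp.continuousAt_comp (hF p hp)).of_comp (tendsto_add_atTop_nat 1)

theorem eq_one_of_forall_le_pow_mul {t a b : ℝ} (ht : 0 ≤ t) (ha : 0 < a)
    (h : ∀ n : ℕ, a ≤ t ^ n * b ∧ t ^ n * a ≤ b) : t = 1 := by
  rcases lt_trichotomy t 1 with hlt | heq | hgt
  · obtain ⟨n, hn⟩ := (((tendsto_pow_atTop_nhds_zero_of_lt_one ht hlt).mul_const b).eventually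
      (gt_mem_nhds (by simpa using ha))).exists
    exact absurd (h n).1 (not_le.mpr hn)
  · exact heq
  · obtain ⟨n, hn⟩ :=
      (((tendsto_pow_atTop_atTop_of_one_lt hgt).atTop_mul_const ha).eventually_gt_atTop b).exists
    exact absurd (h n).2 (not_le.mpr hn)

theorem isCompact_closure_range_of_normalize {X : Type*} [NormedAddCommGroup X]
    [NormedSpace ℝ X] {y : ℕ → X} {R : ℝ}
    (hcpt : IsCompact (closure (range fun k => NormedSpace.normalize (y k))))
    (hR : ∀ k, ‖y k‖ ≤ R) :
    IsCompact (closure (range y)) := by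
  refine (((isCompact_Icc (a := 0) (b := R)).prod hcpt).image continuous_smul).closure_of_subset ?_
  rintro _ ⟨k, rfl⟩
  exact ⟨(‖y k‖, NormedSpace.normalize (y k)),
    ⟨⟨norm_nonneg _, hR k⟩, subset_closure (mem_range_self k)⟩,
    NormedSpace.norm_smul_normalize (y k)⟩

theorem iterate_succ_normalize_comp {X : Type*} [NormedAddCommGroup X] [NormedSpace ℝ X]
    {F : X → X} {s : Set X} (hmaps : MapsTo F s s) (hhom : IsPosHomogeneousOn F s)
    (h0 : (0 : X) ∉ s) {x : X} (hx : x ∈ s) (k : ℕ) :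
    (NormedSpace.normalize ∘ F)^[k + 1] x = NormedSpace.normalize (F^[k + 1] x) := by
  induction k with
  | zero => rfl
  | succ k ih =>
    have hs := hmaps.iterate (k + 1) hx
    have hpos : 0 < ‖F^[k + 1] x‖⁻¹ := inv_pos.mpr (norm_pos_iff.mpr (ne_of_mem_of_not_mem hs h0))
    have hnorm : NormedSpace.normalize (F^[k + 1] x) = ‖F^[k + 1] x‖⁻¹ • F^[k + 1] x := rfl
    rw [Function.iterate_succ_apply', ih, Function.comp_apply, hnorm, hhom _ hs _ hpos,
      NormedSpace.normalize_smul_of_pos hpos, ← Function.iterate_succ_apply' F]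

namespace PointedCone

variable {X : Type*} [NormedAddCommGroup X] [NormedSpace ℝ X] {K : PointedCone ℝ X}

def IsNormalWith (K : PointedCone ℝ X) (κ : ℝ) : Prop :=
  ∀ x y, x ∈ K → y - x ∈ K → ‖x‖ ≤ κ * ‖y‖

def IsOrderPreserving (K : PointedCone ℝ X) (F : X → X) : Prop :=
  ∀ a ∈ interior (K : Set X), ∀ b ∈ interior (K : Set X), b - a ∈ K → F b - F a ∈ K

def IsTypeK (K : PointedCone ℝ X) (F : X → X) : Prop :=
  ∀ a ∈ interior (K : Set X), ∀ b ∈ interior (K : Set X), b - a ∈ K →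
    ∃ ε > (0 : ℝ), F b - F a - ε • (b - a) ∈ K

/-- `m(y / w) = sup {t | t • w ≤ y}` for the order induced by `K`. -/
noncomputable def lowerRatio (K : PointedCone ℝ X) (y w : X) : ℝ :=
  sSup {t : ℝ | y - t • w ∈ K}

theorem smul_mem_interior {t : ℝ} (ht : 0 < t) {z : X} (hz : z ∈ interior (K : Set X)) :
    t • z ∈ interior (K : Set X) :=
  interior_maximal (by rintro _ ⟨w, hw, rfl⟩; exact K.smul_mem ht.le (interior_subset hw))
    (isOpen_interior.smul₀ ht.ne') (smul_mem_smul_set hz)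

theorem mem_interior_of_sub_mem {p w : X} (hp : p ∈ interior (K : Set X)) (hw : w - p ∈ K) :
    w ∈ interior (K : Set X) := by
  have : (· + (w - p)) '' interior (K : Set X) ⊆ interior K :=
    interior_maximal (by rintro _ ⟨z, hz, rfl⟩; exact K.add_mem (interior_subset hz) hw)
      (isOpenMap_add_right _ _ isOpen_interior)
  simpa using this ⟨p, hp, rfl⟩

theorem exists_pos_smul_norm_add_mem {z : X} (hz : z ∈ interior (K : Set X)) :
    ∃ c > 0, ∀ ξ : X, (c * ‖ξ‖) • z + ξ ∈ K := by
  obtain ⟨δ, hδ, hball⟩ := Metric.mem_nhds_iff.mp (mem_interior_iff_mem_nhds.mp hz)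
  refine ⟨2 / δ, by positivity, fun ξ => ?_⟩
  rcases eq_or_ne ξ 0 with rfl | hξ
  · simp
  have hn : 0 < ‖ξ‖ := norm_pos_iff.mpr hξ
  have hmem : z + (δ / (2 * ‖ξ‖)) • ξ ∈ K := hball <| by
    rw [Metric.mem_ball, dist_eq_norm, add_sub_cancel_left, norm_smul,
      Real.norm_of_nonneg (by positivity)]
    field_simp
    linarith
  convert K.smul_mem (by positivity : (0 : ℝ) ≤ 2 / δ * ‖ξ‖) hmem using 1
  rw [smul_add, smul_smul]
  congr 1
  field_simp
  simp

theorem exists_pos_forall_mem_interval {z : X} (hz : z ∈ interior (K : Set X)) :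
    ∃ c > 0, ∀ w, w - (1 - c * ‖w - z‖) • z ∈ K ∧ (1 + c * ‖w - z‖) • z - w ∈ K := by
  obtain ⟨c, hc, h⟩ := exists_pos_smul_norm_add_mem hz
  refine ⟨c, hc, fun w => ⟨?_, ?_⟩⟩
  · convert h (w - z) using 1
    module
  · convert h (z - w) using 1
    rw [norm_sub_rev]
    module

theorem exists_pos_smul_sub_mem {z : X} (hz : z ∈ interior (K : Set X)) (w : X) :
    ∃ b > (0 : ℝ), b • z - w ∈ K := by
  obtain ⟨c, hc, h⟩ := exists_pos_smul_norm_add_mem hz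
  refine ⟨c * ‖-w‖ + 1, by positivity, ?_⟩
  convert K.add_mem (h (-w)) (interior_subset hz) using 1
  module

theorem exists_nonneg_functional_eq_zero_of_notMem_interior {u x : X}
    (hu : u ∈ interior (K : Set X)) (hx : x ∈ K) (hx' : x ∉ interior (K : Set X)) :
    ∃ φ : StrongDual ℝ X, (∀ w ∈ K, 0 ≤ φ w) ∧ 0 < φ u ∧ φ x = 0 := by
  obtain ⟨φ, hφ⟩ := geometric_hahn_banach_point_open K.convex.interior isOpen_interior hx'
  have hφu := hφ u hu
  have hnonneg : ∀ w ∈ K, 0 ≤ φ w := by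
    intro w hw
    by_contra! hneg
    have ht : 0 ≤ (φ u - φ x) / -φ w := div_nonneg (by linarith) (by linarith)
    have := hφ _ (mem_interior_of_sub_mem (w := u + ((φ u - φ x) / -φ w) • w) hu
      (by simpa using K.smul_mem ht hw))
    rw [map_add, map_smul, smul_eq_mul, div_mul_eq_mul_div, div_neg,
      mul_div_cancel_right₀ _ hneg.ne] at this
    linarith
  have hx0 : φ x ≤ 0 := by
    by_contra! hpos
    have := hφ _ (smul_mem_interior (div_pos hpos (hpos.trans hφu)) hu)
    rw [map_smul, smul_eq_mul, div_mul_cancel₀ _ (hpos.trans hφu).ne'] at this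
    exact this.false
  have hφx : φ x = 0 := le_antisymm hx0 (hnonneg x hx)
  exact ⟨φ, hnonneg, hφx ▸ hφu, hφx⟩

theorem map_eq_zero_of_le_of_succ_dominates {φ : StrongDual ℝ X} (hφ : ∀ w ∈ K, 0 ≤ φ w)
    {P : ℕ → X} (hP : ∀ i, P i ∈ K) (hstep : ∀ i, ∃ ε > (0 : ℝ), P (i + 1) - ε • P i ∈ K)
    {n : ℕ} (hn : φ (P n) = 0) {i : ℕ} (hi : i ≤ n) : φ (P i) = 0 := by
  induction hi using Nat.decreasingInduction with
  | self => exact hn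
  | of_succ k _ ih =>
    obtain ⟨ε, hε, h⟩ := hstep k
    have h1 := hφ _ h
    rw [map_sub, map_smul, smul_eq_mul, ih] at h1
    nlinarith [hφ _ (hP k)]

theorem map_eq_pow_mul_of_succ_dominates {φ : StrongDual ℝ X} (hφ : ∀ w ∈ K, 0 ≤ φ w)
    {z : ℕ → X} {ℓ : ℝ} (hP : ∀ i, z (i + 1) - ℓ • z i ∈ K)
    (hstep : ∀ i, ∃ ε > (0 : ℝ), z (i + 1 + 1) - ℓ • z (i + 1) - ε • (z (i + 1) - ℓ • z i) ∈ K)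
    {n : ℕ} (hn : φ (z (n + 1) - ℓ • z n) = 0) : φ (z n) = ℓ ^ n * φ (z 0) := by
  suffices ∀ i ≤ n, φ (z i) = ℓ ^ i * φ (z 0) from this n le_rfl
  intro i hi
  induction i with
  | zero => simp
  | succ i ih =>
    have h := map_eq_zero_of_le_of_succ_dominates hφ (P := fun i => z (i + 1) - ℓ • z i) hP hstep
      hn (i := i) (by omega)
    rw [map_sub, map_smul, smul_eq_mul, sub_eq_zero] at h
    rw [h, ih (by omega), pow_succ]
    ring

theorem le_mul_and_mul_le_of_map_eq_mul {φ : StrongDual ℝ X} (hφ : ∀ w ∈ K, 0 ≤ φ w) {u : X}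
    (hφu : 0 < φ u) {a b s : ℝ} (hs : 0 ≤ s) {y w : X} (hy : y - a • u ∈ K ∧ b • u - y ∈ K)
    (hw : w - a • u ∈ K ∧ b • u - w ∈ K) (hφw : φ w = s * φ y) : a ≤ s * b ∧ s * a ≤ b := by
  have hbound {p : X} (hp : p - a • u ∈ K ∧ b • u - p ∈ K) : a * φ u ≤ φ p ∧ φ p ≤ b * φ u := by
    have h₁ := hφ _ hp.1
    have h₂ := hφ _ hp.2
    simp only [map_sub, map_smul, smul_eq_mul] at h₁ h₂
    constructor <;> linarith
  obtain ⟨hy₁, hy₂⟩ := hbound hy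
  obtain ⟨hw₁, hw₂⟩ := hbound hw
  rw [hφw] at hw₁ hw₂
  constructor
  · refine le_of_mul_le_mul_right ?_ hφu
    nlinarith [mul_le_mul_of_nonneg_left hy₂ hs]
  · refine le_of_mul_le_mul_right ?_ hφu
    nlinarith [mul_le_mul_of_nonneg_left hy₁ hs]

theorem IsNormalWith.norm_sub_le_of_mem_interval {κ : ℝ} (hK : K.IsNormalWith κ) {t : ℝ}
    (ht : 0 ≤ t) {z w : X} (hlow : w - (1 - t) • z ∈ K) (hup : (1 + t) • z - w ∈ K) :
    ‖w - z‖ ≤ (2 * κ + 1) * t * ‖z‖ := by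
  have h := hK _ ((2 * t) • z) hlow (by convert hup using 1; module)
  rw [norm_smul, Real.norm_of_nonneg (by positivity)] at h
  calc ‖w - z‖ = ‖(w - (1 - t) • z) - t • z‖ := by congr 1; module
    _ ≤ ‖w - (1 - t) • z‖ + ‖t • z‖ := norm_sub_le _ _
    _ ≤ (2 * κ + 1) * t * ‖z‖ := by
      rw [norm_smul, Real.norm_of_nonneg ht]
      linarith

theorem IsNormalWith.zero_notMem_interior [Nontrivial X] {κ : ℝ} (hK : K.IsNormalWith κ) :
    (0 : X) ∉ interior (K : Set X) := by
  intro h0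
  obtain ⟨c, -, hc⟩ := exists_pos_smul_norm_add_mem h0
  obtain ⟨ξ, hξ⟩ := exists_ne (0 : X)
  have := hK ξ 0 (by simpa using hc ξ) (by simpa using hc (-ξ))
  simp_all

theorem IsNormalWith.ne_zero_of_mem_interior [Nontrivial X] {κ : ℝ} (hK : K.IsNormalWith κ)
    {z : X} (hz : z ∈ interior (K : Set X)) : z ≠ 0 :=
  ne_of_mem_of_not_mem hz hK.zero_notMem_interior

theorem IsNormalWith.tendsto_of_mapClusterPt {κ : ℝ} (hK : K.IsNormalWith κ)
    (hKc : IsClosed (K : Set X)) {z : ℕ → X} (hz : ∀ j, z (j + 1) - z j ∈ K) {v : X}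
    (hv : MapClusterPt v atTop z) : Tendsto z atTop (𝓝 v) := by
  have hmono : ∀ i k, i ≤ k → z k - z i ∈ K := by
    intro i k hik
    induction k, hik using Nat.le_induction with
    | base => simp
    | succ k _ ih => simpa using K.add_mem (hz k) ih
  have hupper : ∀ i, v - z i ∈ K := fun i =>
    (hKc.preimage (continuous_sub_right (z i))).mem_of_mapClusterPt hv
      ((eventually_ge_atTop i).mono fun k hk => hmono i k hk)
  refine tendsto_of_mapClusterPt_of_dist_le hv one_pos (M := κ) fun i k hik _ => ?_
  rw [dist_eq_norm', dist_eq_norm']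
  exact hK _ _ (hupper k) (by simpa using hmono i k hik)

theorem IsNormalWith.bddAbove_lowerRatio {κ : ℝ} (hK : K.IsNormalWith κ) {y w : X} (hw : w ∈ K)
    (hw0 : w ≠ 0) : BddAbove {t : ℝ | y - t • w ∈ K} := by
  refine ⟨|κ| * ‖y‖ / ‖w‖, fun t ht => ?_⟩
  rcases le_or_gt t 0 with h | h
  · exact h.trans (by positivity)
  have := hK _ _ (K.smul_mem h.le hw) ht
  rw [norm_smul, Real.norm_of_nonneg h.le] at this
  rw [le_div_iff₀ (norm_pos_iff.mpr hw0)]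
  nlinarith [le_abs_self κ, norm_nonneg y]

theorem IsNormalWith.le_lowerRatio_iff {κ : ℝ} (hK : K.IsNormalWith κ)
    (hKc : IsClosed (K : Set X)) {y w : X} (hy : y ∈ K) (hw : w ∈ K) (hw0 : w ≠ 0) {t : ℝ} :
    t ≤ K.lowerRatio y w ↔ y - t • w ∈ K := by
  refine ⟨fun ht => ?_, fun ht => le_csSup (hK.bddAbove_lowerRatio hw hw0) ht⟩
  have hclosed : IsClosed {t : ℝ | y - t • w ∈ K} :=
    hKc.preimage (continuous_const.sub (continuous_id.smul continuous_const))
  have hmem := hclosed.csSup_mem ⟨0, by simpa using hy⟩ (hK.bddAbove_lowerRatio hw hw0)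
  convert K.add_mem hmem (K.smul_mem (sub_nonneg.mpr ht) hw) using 1
  simp only [lowerRatio]
  module

theorem IsNormalWith.le_lowerRatio_iff_of_mem_interior [Nontrivial X] {κ : ℝ}
    (hK : K.IsNormalWith κ) (hKc : IsClosed (K : Set X)) {y w : X}
    (hy : y ∈ interior (K : Set X)) (hw : w ∈ interior (K : Set X)) {t : ℝ} :
    t ≤ K.lowerRatio y w ↔ y - t • w ∈ K :=
  hK.le_lowerRatio_iff hKc (interior_subset hy) (interior_subset hw) (hK.ne_zero_of_mem_interior hw)

theorem IsNormalWith.lowerRatio_pos {κ : ℝ} (hK : K.IsNormalWith κ) {y w : X}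
    (hy : y ∈ interior (K : Set X)) (hw : w ∈ K) (hw0 : w ≠ 0) : 0 < K.lowerRatio y w := by
  obtain ⟨b, hb, hbw⟩ := exists_pos_smul_sub_mem hy w
  have : y - b⁻¹ • w ∈ K := by
    convert K.smul_mem (inv_nonneg.mpr hb.le) hbw using 1
    rw [smul_sub, inv_smul_smul₀ hb.ne']
  exact (inv_pos.mpr hb).trans_le (le_csSup (hK.bddAbove_lowerRatio hw hw0) this)

theorem IsNormalWith.sub_lowerRatio_smul_notMem_interior {κ : ℝ} (hK : K.IsNormalWith κ)
    {y w : X} (hw : w ∈ K) (hw0 : w ≠ 0) : y - K.lowerRatio y w • w ∉ interior (K : Set X) := by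
  intro h
  obtain ⟨b, hb, hbw⟩ := exists_pos_smul_sub_mem h w
  have : y - (K.lowerRatio y w + b⁻¹) • w ∈ K := by
    convert K.smul_mem (inv_nonneg.mpr hb.le) hbw using 1
    rw [smul_sub, inv_smul_smul₀ hb.ne']
    module
  have := le_csSup (hK.bddAbove_lowerRatio hw hw0) this
  linarith [inv_pos.mpr hb, show K.lowerRatio y w = sSup {t : ℝ | y - t • w ∈ K} from rfl]

section Maps

variable {F : X → X}

theorem IsTypeK.isOrderPreserving (hF : K.IsTypeK F) : K.IsOrderPreserving F :=
  fun a ha b hb hab => by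
    obtain ⟨ε, hε, h⟩ := hF a ha b hb hab
    simpa using K.add_mem h (K.smul_mem hε.le hab)

theorem IsTypeK.const_smul (hF : K.IsTypeK F) {c : ℝ} (hc : 0 < c) :
    K.IsTypeK fun z => c • F z := fun a ha b hb hab => by
  obtain ⟨ε, hε, h⟩ := hF a ha b hb hab
  refine ⟨c * ε, by positivity, ?_⟩
  convert K.smul_mem hc.le h using 1
  module

theorem IsOrderPreserving.continuousAt {κ : ℝ} (hK : K.IsNormalWith κ)
    (hF : K.IsOrderPreserving F) (hhom : IsPosHomogeneousOn F (interior K)) {z : X}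
    (hz : z ∈ interior (K : Set X)) : ContinuousAt F z := by
  obtain ⟨c, hc, hcz⟩ := exists_pos_forall_mem_interval hz
  have hbound : ∀ᶠ w in 𝓝 z, ‖F w - F z‖ ≤ (2 * κ + 1) * (c * ‖w - z‖) * ‖F z‖ := by
    filter_upwards [Metric.ball_mem_nhds z (inv_pos.mpr hc)] with w hw
    rw [Metric.mem_ball, dist_eq_norm] at hw
    have ht : c * ‖w - z‖ < 1 := by
      calc c * ‖w - z‖ < c * c⁻¹ := by gcongr
        _ = 1 := mul_inv_cancel₀ hc.ne'
    have hlow : (1 - c * ‖w - z‖) • z ∈ interior (K : Set X) := smul_mem_interior (by linarith) hz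
    have hup : (1 + c * ‖w - z‖) • z ∈ interior (K : Set X) := smul_mem_interior (by positivity) hz
    have hw' : w ∈ interior (K : Set X) := mem_interior_of_sub_mem hlow (hcz w).1
    refine hK.norm_sub_le_of_mem_interval (by positivity) ?_ ?_
    · rw [← hhom z hz _ (by linarith)]
      exact hF _ hlow _ hw' (hcz w).1
    · rw [← hhom z hz _ (by positivity)]
      exact hF _ hw' _ hup (hcz w).2
  have hlim : Tendsto (fun w => (2 * κ + 1) * (c * ‖w - z‖) * ‖F z‖) (𝓝 z) (𝓝 0) := by
    simpa using ((tendsto_norm_sub_self z).const_mul c).const_mul (2 * κ + 1) |>.mul_const ‖F z‖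
  exact tendsto_iff_norm_sub_tendsto_zero.mpr
    (squeeze_zero' (.of_forall fun _ => norm_nonneg _) hbound hlim)

theorem IsOrderPreserving.iterate_mem_interval (hF : K.IsOrderPreserving F)
    (hmaps : MapsTo F (interior K) (interior K)) {p q y : X} (hp : p ∈ interior (K : Set X))
    (hq : q ∈ interior (K : Set X)) (hFp : F p = p) (hFq : F q = q)
    (hy : y ∈ interior (K : Set X)) (hpy : y - p ∈ K) (hyq : q - y ∈ K) (k : ℕ) :
    F^[k] y - p ∈ K ∧ q - F^[k] y ∈ K := by
  induction k with
  | zero => exact ⟨hpy, hyq⟩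
  | succ k ih =>
    have hk := hmaps.iterate k hy
    rw [Function.iterate_succ_apply']
    constructor
    · simpa only [hFp] using hF _ hp _ hk ih.1
    · simpa only [hFq] using hF _ hk _ hq ih.2

theorem IsNormalWith.tendsto_iterate_of_mapClusterPt {κ : ℝ} (hK : K.IsNormalWith κ)
    (hF : K.IsOrderPreserving F) (hmaps : MapsTo F (interior K) (interior K))
    (hhom : IsPosHomogeneousOn F (interior K)) {v y : X} (hv : v ∈ interior (K : Set X))
    (hFv : F v = v) (hy : y ∈ interior (K : Set X))
    (hclu : MapClusterPt v atTop fun k => F^[k] y) :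
    Tendsto (fun k => F^[k] y) atTop (𝓝 v) := by
  obtain ⟨c, hc, hcv⟩ := exists_pos_forall_mem_interval hv
  refine tendsto_of_mapClusterPt_of_dist_le hclu (inv_pos.mpr hc)
    (M := (2 * κ + 1) * c * ‖v‖) fun i k hik hi => ?_
  simp only [dist_eq_norm] at hi ⊢
  set t := c * ‖F^[i] y - v‖
  have ht : t < 1 := by
    calc t < c * c⁻¹ := mul_lt_mul_of_pos_left hi hc
      _ = 1 := mul_inv_cancel₀ hc.ne'
  have hfix {s : ℝ} (hs : 0 < s) : F (s • v) = s • v := by rw [hhom v hv s hs, hFv]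
  have h := hF.iterate_mem_interval hmaps (smul_mem_interior (by linarith) hv)
    (smul_mem_interior (by positivity) hv) (hfix (by linarith)) (hfix (by positivity))
    (hmaps.iterate i hy) (hcv _).1 (hcv _).2 (k - i)
  rw [← Function.iterate_add_apply, Nat.sub_add_cancel hik] at h
  calc ‖F^[k] y - v‖ ≤ (2 * κ + 1) * t * ‖v‖ :=
        hK.norm_sub_le_of_mem_interval (by positivity) h.1 h.2
    _ = (2 * κ + 1) * c * ‖v‖ * ‖F^[i] y - v‖ := by ring

variable [Nontrivial X]

theorem IsNormalWith.lowerRatio_le_lowerRatio_apply {κ : ℝ} (hK : K.IsNormalWith κ)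
    (hKc : IsClosed (K : Set X)) (hF : K.IsOrderPreserving F)
    (hmaps : MapsTo F (interior K) (interior K)) (hhom : IsPosHomogeneousOn F (interior K))
    {w : X} (hw : w ∈ interior (K : Set X)) :
    K.lowerRatio (F w) w ≤ K.lowerRatio (F (F w)) (F w) := by
  have hFw := hmaps hw
  have hm := hK.lowerRatio_pos hFw (interior_subset hw) (hK.ne_zero_of_mem_interior hw)
  have h := (hK.le_lowerRatio_iff_of_mem_interior hKc hFw hw).mp le_rfl
  have h' := hF _ (smul_mem_interior hm hw) _ hFw h
  rw [hhom w hw _ hm] at h'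
  exact (hK.le_lowerRatio_iff_of_mem_interior hKc (hmaps hFw) hFw).mpr h'

theorem IsNormalWith.upperSemicontinuousOn_lowerRatio {κ : ℝ} (hK : K.IsNormalWith κ)
    (hKc : IsClosed (K : Set X)) (hmaps : MapsTo F (interior K) (interior K))
    (hcont : ∀ z ∈ interior (K : Set X), ContinuousAt F z) :
    UpperSemicontinuousOn (fun w => K.lowerRatio (F w) w) (interior K) := by
  intro w hw t ht
  have hiff {w : X} (hw : w ∈ interior (K : Set X)) :=
    hK.le_lowerRatio_iff_of_mem_interior hKc (hmaps hw) hw (t := t)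
  have hnot : F w - t • w ∉ K := fun h => ht.not_ge ((hiff hw).mpr h)
  have hev : ∀ᶠ w' in 𝓝 w, F w' - t • w' ∉ K :=
    ((hcont w hw).sub (continuousAt_id.const_smul t)).eventually
      (hKc.isOpen_compl.mem_nhds hnot)
  filter_upwards [nhdsWithin_le_nhds hev, self_mem_nhdsWithin] with w' h1 h2
  exact lt_of_not_ge fun h => h1 ((hiff h2).mp h)

theorem IsNormalWith.exists_forall_lowerRatio_iterate_eq {κ : ℝ} (hK : K.IsNormalWith κ)
    (hKc : IsClosed (K : Set X)) (hF : K.IsOrderPreserving F)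
    (hmaps : MapsTo F (interior K) (interior K)) (hhom : IsPosHomogeneousOn F (interior K))
    {L : Set X} (hLc : IsCompact L) (hLne : L.Nonempty) (hLK : L ⊆ interior K)
    (hLF : MapsTo F L L) :
    ∃ z ∈ L, ∀ j, K.lowerRatio (F (F^[j] z)) (F^[j] z) = K.lowerRatio (F z) z := by
  have hcont z (hz : z ∈ interior (K : Set X)) := hF.continuousAt hK hhom hz
  obtain ⟨z, hzL, hmax⟩ :=
    ((hK.upperSemicontinuousOn_lowerRatio hKc hmaps hcont).mono hLK).exists_isMaxOn hLne hLc
  refine ⟨z, hzL, fun j => ?_⟩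
  induction j with
  | zero => rfl
  | succ j ih =>
    refine le_antisymm (hmax (hLF.iterate (j + 1) hzL)) ?_
    rw [Function.iterate_succ_apply', ← ih]
    exact hK.lowerRatio_le_lowerRatio_apply hKc hF hmaps hhom (hLK (hLF.iterate j hzL))

theorem IsNormalWith.lowerRatio_eq_one {κ : ℝ} (hK : K.IsNormalWith κ)
    (hKc : IsClosed (K : Set X)) (hF : K.IsTypeK F)
    (hmaps : MapsTo F (interior K) (interior K)) (hhom : IsPosHomogeneousOn F (interior K))
    {u z : X} (hu : u ∈ interior (K : Set X)) (hz : z ∈ interior (K : Set X)) {a b : ℝ}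
    (ha : 0 < a) (hbounds : ∀ j, F^[j] z - a • u ∈ K ∧ b • u - F^[j] z ∈ K)
    (hconst : ∀ j, K.lowerRatio (F (F^[j] z)) (F^[j] z) = K.lowerRatio (F z) z) :
    K.lowerRatio (F z) z = 1 := by
  set ℓ := K.lowerRatio (F z) z
  have hzj j : F^[j] z ∈ interior (K : Set X) := hmaps.iterate j hz
  have hℓ : 0 < ℓ :=
    hK.lowerRatio_pos (hmaps hz) (interior_subset hz) (hK.ne_zero_of_mem_interior hz)
  have hP j : F^[j + 1] z - ℓ • F^[j] z ∈ K := by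
    have := (hK.le_lowerRatio_iff_of_mem_interior hKc (hmaps (hzj j)) (hzj j)).mp (hconst j).ge
    rwa [← Function.iterate_succ_apply' F] at this
  have hPint j : F^[j + 1] z - ℓ • F^[j] z ∉ interior (K : Set X) := by
    have := hK.sub_lowerRatio_smul_notMem_interior (y := F (F^[j] z)) (interior_subset (hzj j))
      (hK.ne_zero_of_mem_interior (hzj j))
    rwa [hconst j, ← Function.iterate_succ_apply' F] at this
  have hstep j : ∃ ε > (0 : ℝ),
      F^[j + 1 + 1] z - ℓ • F^[j + 1] z - ε • (F^[j + 1] z - ℓ • F^[j] z) ∈ K := by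
    obtain ⟨ε, hε, h⟩ := hF _ (smul_mem_interior hℓ (hzj j)) _ (hzj (j + 1)) (hP j)
    refine ⟨ε, hε, ?_⟩
    rw [hhom _ (hzj j) _ hℓ] at h
    simpa only [Function.iterate_succ_apply'] using h
  refine eq_one_of_forall_le_pow_mul (b := b) hℓ.le ha fun n => ?_
  obtain ⟨φ, hφ, hφu, hφP⟩ :=
    exists_nonneg_functional_eq_zero_of_notMem_interior hu (hP n) (hPint n)
  exact le_mul_and_mul_le_of_map_eq_mul hφ hφu (by positivity) (hbounds 0) (hbounds n)
    (map_eq_pow_mul_of_succ_dominates hφ (z := fun j => F^[j] z) hP hstep hφP)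

theorem IsNormalWith.exists_isFixedPt {κ : ℝ} (hK : K.IsNormalWith κ)
    (hKc : IsClosed (K : Set X)) (hF : K.IsTypeK F)
    (hmaps : MapsTo F (interior K) (interior K)) (hhom : IsPosHomogeneousOn F (interior K))
    {L : Set X} (hLc : IsCompact L) (hLne : L.Nonempty) (hLF : MapsTo F L L) {u : X}
    (hu : u ∈ interior (K : Set X)) {a b : ℝ} (ha : 0 < a)
    (hLab : ∀ p ∈ L, p - a • u ∈ K ∧ b • u - p ∈ K) : ∃ v ∈ L, F v = v := by
  have hLK : L ⊆ interior K := fun p hp =>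
    mem_interior_of_sub_mem (smul_mem_interior ha hu) (hLab p hp).1
  obtain ⟨z, hzL, hconst⟩ :=
    hK.exists_forall_lowerRatio_iterate_eq hKc hF.isOrderPreserving hmaps hhom hLc hLne hLK hLF
  have hone := hK.lowerRatio_eq_one hKc hF hmaps hhom hu (hLK hzL) ha
    (fun j => hLab _ (hLF.iterate j hzL)) hconst
  have hincr j : F^[j + 1] z - F^[j] z ∈ K := by
    have hzj := hLK (hLF.iterate j hzL)
    have := (hK.le_lowerRatio_iff_of_mem_interior hKc (hmaps hzj) hzj).mp
      (by rw [hconst j, hone])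
    simpa [Function.iterate_succ_apply'] using this
  obtain ⟨v, hvL, hv⟩ := hLc.exists_mapClusterPt (f := atTop) (u := fun j => F^[j] z)
    (tendsto_principal.mpr (.of_forall fun j => hLF.iterate j hzL))
  have hlim := hK.tendsto_of_mapClusterPt hKc hincr hv
  refine ⟨v, hvL, tendsto_nhds_unique
    ((hF.isOrderPreserving.continuousAt hK hhom (hLK hvL)).tendsto.comp hlim) ?_⟩
  simpa only [Function.comp_def, Function.iterate_succ_apply'] using
    (tendsto_add_atTop_iff_nat 1).mpr hlim

theorem IsNormalWith.exists_isFixedPt_tendsto_iterate {κ : ℝ} (hK : K.IsNormalWith κ)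
    (hKc : IsClosed (K : Set X)) (hF : K.IsTypeK F)
    (hmaps : MapsTo F (interior K) (interior K)) (hhom : IsPosHomogeneousOn F (interior K))
    {u : X} (hu : u ∈ interior (K : Set X)) (hFu : F u = u) {y : X}
    (hy : y ∈ interior (K : Set X))
    (hcpt : IsCompact (closure (range fun k => NormedSpace.normalize (F^[k] y)))) :
    ∃ v ∈ interior (K : Set X), F v = v ∧ Tendsto (fun k => F^[k] y) atTop (𝓝 v) := by
  have hFo := hF.isOrderPreserving
  have hfix {s : ℝ} (hs : 0 < s) : F (s • u) = s • u := by rw [hhom u hu s hs, hFu]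
  obtain ⟨b, hb, hub⟩ := exists_pos_smul_sub_mem hu y
  obtain ⟨a, ha, hya⟩ := exists_pos_smul_sub_mem hy u
  have hya' : y - a⁻¹ • u ∈ K := by
    convert K.smul_mem (inv_nonneg.mpr ha.le) hya using 1
    rw [smul_sub, inv_smul_smul₀ ha.ne']
  have hsand := hFo.iterate_mem_interval hmaps (smul_mem_interior (inv_pos.mpr ha) hu)
    (smul_mem_interior hb hu) (hfix (inv_pos.mpr ha)) (hfix hb) hy hya' hub
  have horbit : IsCompact (closure (range fun k => F^[k] y)) :=
    isCompact_closure_range_of_normalize hcpt fun k =>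
      hK _ _ (interior_subset (hmaps.iterate k hy)) (hsand k).2
  set L := {p | MapClusterPt p atTop fun k => F^[k] y}
  have hLab p (hp : p ∈ L) : p - a⁻¹ • u ∈ K ∧ b • u - p ∈ K :=
    ⟨(hKc.preimage (continuous_sub_right _)).mem_of_mapClusterPt hp
        (.of_forall fun k => (hsand k).1),
      (hKc.preimage (continuous_sub_left _)).mem_of_mapClusterPt hp
        (.of_forall fun k => (hsand k).2)⟩
  have hLK : L ⊆ interior K := fun p hp =>
    mem_interior_of_sub_mem (smul_mem_interior (inv_pos.mpr ha) hu) (hLab p hp).1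
  have hLF : MapsTo F L L := mapsTo_setOf_mapClusterPt_iterate fun p hp =>
    hFo.continuousAt hK hhom (hLK hp)
  obtain ⟨v, hvL, hFv⟩ := hK.exists_isFixedPt hKc hF hmaps hhom horbit.isCompact_setOf_mapClusterPt
    horbit.nonempty_setOf_mapClusterPt hLF hu (inv_pos.mpr ha) hLab
  exact ⟨v, hLK hvL, hFv, hK.tendsto_iterate_of_mapClusterPt hFo hmaps hhom (hLK hvL) hFv hy hvL⟩

theorem IsNormalWith.exists_tendsto_iterate_normalize_comp {κ : ℝ} (hK : K.IsNormalWith κ)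
    (hKc : IsClosed (K : Set X)) {f : X → X} (hmaps : MapsTo f (interior K) (interior K))
    (hhom : IsPosHomogeneousOn f (interior K)) (hf : K.IsTypeK f) {u : X}
    (hu : u ∈ interior (K : Set X)) {μ : ℝ} (hμ : 0 < μ) (hfu : f u = μ • u) {x : X}
    (hx : x ∈ interior (K : Set X))
    (horbit : IsCompact (closure (range fun k => (NormedSpace.normalize ∘ f)^[k] x))) :
    ∃ v ∈ interior (K : Set X), f v = μ • v ∧
      Tendsto (fun k => (NormedSpace.normalize ∘ f)^[k] x) atTop (𝓝 v) := by
  have hμ' : 0 < μ⁻¹ := inv_pos.mpr hμ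
  set F : X → X := fun z => μ⁻¹ • f z
  have hFmaps : MapsTo F (interior K) (interior K) := fun z hz => smul_mem_interior hμ' (hmaps hz)
  have hFu : F u = u := by simp only [F, hfu, smul_smul, inv_mul_cancel₀ hμ.ne', one_smul]
  have hiter k : (NormedSpace.normalize ∘ f)^[k + 1] x = NormedSpace.normalize (F^[k] (F x)) := by
    have hnormalize : NormedSpace.normalize ∘ f = NormedSpace.normalize ∘ F :=
      funext fun z => (NormedSpace.normalize_smul_of_pos hμ' (f z)).symm
    rw [hnormalize, iterate_succ_normalize_comp hFmaps (hhom.const_smul _)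
      hK.zero_notMem_interior hx, Function.iterate_succ_apply]
  obtain ⟨v, hv, hFv, hlim⟩ := hK.exists_isFixedPt_tendsto_iterate hKc (hf.const_smul hμ')
    hFmaps (hhom.const_smul _) hu hFu (hFmaps hx) (horbit.of_isClosed_subset isClosed_closure
      (closure_mono (by rintro _ ⟨k, rfl⟩; exact ⟨k + 1, hiter k⟩)))
  have hv0 := hK.ne_zero_of_mem_interior hv
  have hvpos : 0 < ‖v‖⁻¹ := inv_pos.mpr (norm_pos_iff.mpr hv0)
  refine ⟨NormedSpace.normalize v, smul_mem_interior hvpos hv, ?_, ?_⟩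
  · have hfv : f v = μ • v :=
      calc f v = μ • F v := (smul_inv_smul₀ hμ.ne' _).symm
        _ = μ • v := congrArg (μ • ·) hFv
    rw [NormedSpace.normalize, hhom v hv _ hvpos, hfv, smul_comm]
  · rw [← tendsto_add_atTop_iff_nat 1]
    simpa only [hiter, NormedSpace.normalize] using
      (hlim.norm.inv₀ (norm_ne_zero_iff.mpr hv0)).smul hlim

end Maps

end PointedCone

theorem normalized_iterates_converge_to_eigenvector_general
    {X : Type*} [NormedAddCommGroup X] [NormedSpace ℝ X]
    (C : Set X) (hC_closed : IsClosed C) (hC_convex : Convex ℝ C)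
    (hC_cone : ∀ x ∈ C, ∀ t : ℝ, 0 ≤ t → t • x ∈ C)
    (hC_normal : ∃ κ > 0, ∀ x y : X, x ∈ C → y - x ∈ C → ‖x‖ ≤ κ * ‖y‖)
    (f : X → X)
    (hf_maps : ∀ x ∈ interior C, f x ∈ interior C)
    (hf_typeK : ∀ x ∈ interior C, ∀ y ∈ interior C, y - x ∈ C →
      ∃ ε > 0, (f y - f x) - ε • (y - x) ∈ C)
    (hf_hom : ∀ x ∈ interior C, ∀ t : ℝ, 0 < t → f (t • x) = t • f x)
    (hf_eig : ∃ u ∈ interior C, ∃ μ > 0, f u = μ • u)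
    (x : X) (hx : x ∈ interior C)
    (horbit : IsCompact (closure (Set.range fun k => (fun z => ‖f z‖⁻¹ • f z)^[k] x))) :
    ∃ v ∈ interior C, (∃ μ > 0, f v = μ • v) ∧
      Tendsto (fun k => (fun z => ‖f z‖⁻¹ • f z)^[k] x) atTop (𝓝 v) := by
  rcases subsingleton_or_nontrivial X with hX | hX
  · exact ⟨x, hx, ⟨1, one_pos, Subsingleton.elim _ _⟩,
      tendsto_const_nhds.congr fun _ => Subsingleton.elim _ _⟩
  obtain ⟨κ, -, hκ⟩ := hC_normal
  obtain ⟨u, hu, μ, hμ, hfu⟩ := hf_eig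
  let K : PointedCone ℝ X := .ofConeComb C ⟨x, interior_subset hx⟩ fun a ha b hb s hs t ht =>
    hC_convex.add_mem_of_forall_smul_mem hC_cone (hC_cone a ha s hs) (hC_cone b hb t ht)
  have htypeK : K.IsTypeK f := fun a ha b hb hab => by
    obtain ⟨ε, hε, h⟩ := hf_typeK a ha b hb hab
    exact ⟨ε, Nat.cast_pos.mpr hε, by rwa [Nat.cast_smul_eq_nsmul]⟩
  obtain ⟨v, hv, hfv, hlim⟩ := PointedCone.IsNormalWith.exists_tendsto_iterate_normalize_comp
    (K := K) hκ hC_closed hf_maps hf_hom htypeK hu (Nat.cast_pos.mpr hμ)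
    (by rwa [Nat.cast_smul_eq_nsmul]) hx horbit
  exact ⟨v, hv, ⟨μ, hμ, by rwa [Nat.cast_smul_eq_nsmul] at hfv⟩, hlim⟩

/-- Let C be a normal closed cone with nonempty interior in a real Banach space.
Let f : int C → int C be type K order-preserving and homogeneous, and let g(x) := f(x)/‖f(x)‖.
If f has an eigenvector in int C and for some x ∈ int C the orbit {g^k(x)} has compact closure,
then g^k(x) converges to an eigenvector of f in int C. -/
theorem normalized_iterates_converge_to_eigenvector
    {X : Type*} [NormedAddCommGroup X] [NormedSpace ℝ X] [CompleteSpace X]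
    (C : Set X) (hC_closed : IsClosed C) (hC_convex : Convex ℝ C)
    (hC_cone : ∀ x ∈ C, ∀ t : ℝ, 0 ≤ t → t • x ∈ C)
    (hC_pointed : ∀ x, x ∈ C → -x ∈ C → x = 0)
    (hC_int : (interior C).Nonempty)
    (hC_normal : ∃ κ > 0, ∀ x y : X, x ∈ C → y - x ∈ C → ‖x‖ ≤ κ * ‖y‖)
    (f : X → X)
    (hf_maps : ∀ x ∈ interior C, f x ∈ interior C)
    (hf_typeK : ∀ x ∈ interior C, ∀ y ∈ interior C, y - x ∈ C →
      ∃ ε > 0, (f y - f x) - ε • (y - x) ∈ C)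
    (hf_hom : ∀ x ∈ interior C, ∀ t : ℝ, 0 < t → f (t • x) = t • f x)
    (hf_eig : ∃ u ∈ interior C, ∃ μ > 0, f u = μ • u)
    (x : X) (hx : x ∈ interior C)
    (horbit : IsCompact (closure (Set.range fun k => (fun z => ‖f z‖⁻¹ • f z)^[k] x))) :
    ∃ v ∈ interior C, (∃ μ > 0, f v = μ • v) ∧
      Tendsto (fun k => (fun z => ‖f z‖⁻¹ • f z)^[k] x) atTop (𝓝 v) :=
  normalized_iterates_converge_to_eigenvector_general C hC_closed hC_convex hC_cone hC_normal f
    hf_maps hf_typeK hf_hom hf_eig x hx horbit
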